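/- There exists a universal constant C > 0 with the following property. For all integers d ≥ 1 and T ≥ 16, and all vectors x_1, ..., x_T ∈ ℝ^d with ‖x_t‖₂ ≤ 1, define Λ_0 = I_d, Λ_t = Λ_{t-1} + x_t x_tᵀ, ω_t = √(x_tᵀ Λ_{t-1}^{-1} x_t), and α_t = √(max{1, ln((T ln T) ω_t² / d)}) for t = 1, ..., T. Then ∑_{t=1}^{T} (√d + α_t) ω_t ≤ C (d √(T ln T) + √(d T ln T · ln ln T)). -/

import Mathlib

/-!
Write `w_t = x_tᵀ Λ_{t-1}⁻¹ x_t`. The matrix determinant lemma gives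
`det Λ_t = det Λ_{t-1} (1 + w_t)`, and `Λ_{t-1} ≥ I` forces `w_t ≤ ‖x_t‖² ≤ 1`, so
`w_t ≤ 2 log (1 + w_t)`; telescoping gives the elliptical potential bound
`∑ w_t ≤ 2 log det Λ_T ≤ 2 d log (1 + T)`, as every eigenvalue of `Λ_T` is at most `1 + T`.
Instead of splitting the indices and using Jensen, `α_t²` is bounded termwise by
`max 1 (log z) ≤ 1 + log c + z / c` with `c = (log T)²`, which yields `∑ α_t² ≤ 7 T log log T`.
Cauchy–Schwarz against `∑ w_t` then bounds both parts of the sum, with `C = 6`.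
-/

open Matrix Real

theorem Nat.forall_le_induction {T : ℕ} {P : ℕ → Prop} (h0 : P 0)
    (hsucc : ∀ t : Fin T, P t → P (t + 1)) : ∀ k ≤ T, P k :=
  fun k hk => Fin.induction (motive := fun i => P i) h0 hsucc ⟨k, Nat.lt_succ_of_le hk⟩

namespace Matrix

variable {n : Type*} [Fintype n]

lemma dotProduct_vecMulVec_self_mulVec (u y : n → ℝ) :
    y ⬝ᵥ (vecMulVec u u *ᵥ y) = (u ⬝ᵥ y) ^ 2 := by
  rw [vecMulVec_mulVec, op_smul_eq_smul, dotProduct_smul, smul_eq_mul, dotProduct_comm, sq]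

lemma dotProduct_sq_le_dotProduct_self_mul (u y : n → ℝ) :
    (u ⬝ᵥ y) ^ 2 ≤ (u ⬝ᵥ u) * (y ⬝ᵥ y) := by
  simpa only [dotProduct, sq] using Finset.sum_mul_sq_le_sq_mul_sq Finset.univ u y

variable [DecidableEq n]

theorem det_add_vecMulVec {α : Type*} [CommRing α] {A : Matrix n n α} (hA : IsUnit A.det)
    (u v : n → α) : (A + vecMulVec u v).det = A.det * (1 + v ⬝ᵥ (A⁻¹ *ᵥ u)) := by
  rw [vecMulVec_eq Unit, det_add_replicateCol_mul_replicateRow hA, det_unique (n := Unit),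
    add_apply, one_apply_eq, Matrix.mul_assoc, ← replicateCol_mulVec,
    replicateRow_mul_replicateCol_apply]

lemma dotProduct_inv_mulVec_le_dotProduct_self {A : Matrix n n ℝ} (hA : IsUnit A.det)
    (hA_ge : ∀ y, y ⬝ᵥ y ≤ y ⬝ᵥ (A *ᵥ y)) (x : n → ℝ) :
    x ⬝ᵥ (A⁻¹ *ᵥ x) ≤ x ⬝ᵥ x := by
  set y := A⁻¹ *ᵥ x
  have hx : A *ᵥ y = x := by rw [mulVec_mulVec, mul_nonsing_inv A hA, one_mulVec]
  have hw : x ⬝ᵥ y = y ⬝ᵥ (A *ᵥ y) := by rw [dotProduct_comm, hx]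
  have hy : y ⬝ᵥ y ≤ x ⬝ᵥ y := hw ▸ hA_ge y
  have hcs := dotProduct_sq_le_dotProduct_self_mul x y
  have hy0 : 0 ≤ y ⬝ᵥ y := by simpa using dotProduct_star_self_nonneg y
  have hx0 : 0 ≤ x ⬝ᵥ x := by simpa using dotProduct_star_self_nonneg x
  nlinarith [mul_le_mul_of_nonneg_left hy hx0]

lemma PosDef.dotProduct_inv_mulVec_nonneg {A : Matrix n n ℝ} (hA : A.PosDef) (x : n → ℝ) :
    0 ≤ x ⬝ᵥ (A⁻¹ *ᵥ x) := by
  simpa using hA.inv.posSemidef.dotProduct_mulVec_nonneg x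

lemma PosDef.dotProduct_inv_mulVec_le_two_mul_log_det {A : Matrix n n ℝ} (hA : A.PosDef)
    {u : n → ℝ} (hu : u ⬝ᵥ (A⁻¹ *ᵥ u) ≤ 1) :
    u ⬝ᵥ (A⁻¹ *ᵥ u) ≤ 2 * (log (A + vecMulVec u u).det - log A.det) := by
  set w := u ⬝ᵥ (A⁻¹ *ᵥ u)
  have hw : 0 ≤ w := hA.dotProduct_inv_mulVec_nonneg u
  rw [det_add_vecMulVec hA.det_pos.ne'.isUnit u u, log_mul hA.det_pos.ne' (by positivity),
    add_sub_cancel_left]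
  have := le_log_one_add_of_nonneg hw
  rw [div_le_iff₀ (by positivity)] at this
  nlinarith

lemma IsHermitian.eigenvalues_le {A : Matrix n n ℝ} (hA : A.IsHermitian) {c : ℝ}
    (hA_le : ∀ y, y ⬝ᵥ (A *ᵥ y) ≤ c * (y ⬝ᵥ y)) (i : n) : hA.eigenvalues i ≤ c := by
  set v : n → ℝ := ⇑(hA.eigenvectorBasis i)
  have hv : 0 < v ⬝ᵥ v := by
    have := (dotProduct_star_self_pos_iff (v := v)).mpr
      (by simpa [v] using hA.eigenvectorBasis.orthonormal.ne_zero i)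
    rwa [star_trivial] at this
  have := hA_le v
  rw [show A *ᵥ v = hA.eigenvalues i • v by simpa using hA.mulVec_eigenvectorBasis i,
    dotProduct_smul, smul_eq_mul] at this
  exact le_of_mul_le_mul_right this hv

lemma PosSemidef.det_le_pow {A : Matrix n n ℝ} (hA : A.PosSemidef) {c : ℝ}
    (hA_le : ∀ y, y ⬝ᵥ (A *ᵥ y) ≤ c * (y ⬝ᵥ y)) : A.det ≤ c ^ Fintype.card n := by
  rw [hA.isHermitian.det_eq_prod_eigenvalues, ← Finset.card_univ, ← Finset.prod_const]
  exact Finset.prod_le_prod (fun i _ => hA.eigenvalues_nonneg i)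
    (fun i _ => hA.isHermitian.eigenvalues_le hA_le i)

end Matrix

section RankOneUpdates

variable {n : Type*} [Fintype n] [DecidableEq n] {T : ℕ} {x : Fin T → n → ℝ}
  {Λ : ℕ → Matrix n n ℝ}

lemma posDef_of_rankOne_updates (hΛ0 : Λ 0 = 1)
    (hΛ : ∀ t : Fin T, Λ (t + 1) = Λ t + vecMulVec (x t) (x t)) : ∀ k ≤ T, (Λ k).PosDef :=
  Nat.forall_le_induction (hΛ0 ▸ PosDef.one) fun t ht =>
    hΛ t ▸ ht.add_posSemidef (by simpa using posSemidef_vecMulVec_self_star (x t))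

lemma dotProduct_self_le_of_rankOne_updates (hΛ0 : Λ 0 = 1)
    (hΛ : ∀ t : Fin T, Λ (t + 1) = Λ t + vecMulVec (x t) (x t)) :
    ∀ k ≤ T, ∀ y, y ⬝ᵥ y ≤ y ⬝ᵥ (Λ k *ᵥ y) := by
  refine Nat.forall_le_induction (by simp [hΛ0]) fun t ht y => ?_
  rw [hΛ t, add_mulVec, dotProduct_add, dotProduct_vecMulVec_self_mulVec]
  nlinarith [ht y, sq_nonneg (x t ⬝ᵥ y)]

lemma dotProduct_mulVec_le_of_rankOne_updates (hΛ0 : Λ 0 = 1)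
    (hΛ : ∀ t : Fin T, Λ (t + 1) = Λ t + vecMulVec (x t) (x t)) (hx : ∀ t, x t ⬝ᵥ x t ≤ 1) :
    ∀ k ≤ T, ∀ y, y ⬝ᵥ (Λ k *ᵥ y) ≤ (1 + k) * (y ⬝ᵥ y) := by
  refine Nat.forall_le_induction (by simp [hΛ0]) fun t ht y => ?_
  rw [hΛ t, add_mulVec, dotProduct_add, dotProduct_vecMulVec_self_mulVec]
  have hy0 : 0 ≤ y ⬝ᵥ y := by simpa using dotProduct_star_self_nonneg y
  have := dotProduct_sq_le_dotProduct_self_mul (x t) y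
  push_cast
  nlinarith [ht y, mul_le_mul_of_nonneg_right (hx t) hy0]

lemma sum_dotProduct_inv_mulVec_le_two_mul_log_det (hΛ0 : Λ 0 = 1)
    (hΛ : ∀ t : Fin T, Λ (t + 1) = Λ t + vecMulVec (x t) (x t)) (hx : ∀ t, x t ⬝ᵥ x t ≤ 1) :
    ∑ t : Fin T, x t ⬝ᵥ ((Λ t)⁻¹ *ᵥ x t) ≤ 2 * log (Λ T).det := by
  have hpd := posDef_of_rankOne_updates hΛ0 hΛ
  have hge := dotProduct_self_le_of_rankOne_updates hΛ0 hΛ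
  calc ∑ t : Fin T, x t ⬝ᵥ ((Λ t)⁻¹ *ᵥ x t)
      ≤ ∑ t : Fin T, 2 * (log (Λ (t + 1)).det - log (Λ t).det) := by
        refine Finset.sum_le_sum fun t _ => ?_
        have hpdt := hpd t t.is_lt.le
        rw [hΛ t]
        exact hpdt.dotProduct_inv_mulVec_le_two_mul_log_det
          ((dotProduct_inv_mulVec_le_dotProduct_self hpdt.det_pos.ne'.isUnit
            (hge t t.is_lt.le) (x t)).trans (hx t))
    _ = 2 * log (Λ T).det := by
        rw [← Finset.mul_sum,
          Fin.sum_univ_eq_sum_range (fun k => log (Λ (k + 1)).det - log (Λ k).det),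
          Finset.sum_range_sub (fun k => log (Λ k).det), hΛ0, det_one, log_one, sub_zero]

lemma log_det_le_of_rankOne_updates (hΛ0 : Λ 0 = 1)
    (hΛ : ∀ t : Fin T, Λ (t + 1) = Λ t + vecMulVec (x t) (x t)) (hx : ∀ t, x t ⬝ᵥ x t ≤ 1) :
    log (Λ T).det ≤ Fintype.card n * log (1 + T) := by
  have hpd := posDef_of_rankOne_updates hΛ0 hΛ T le_rfl
  rw [← log_pow]
  exact log_le_log hpd.det_pos
    (hpd.posSemidef.det_le_pow (dotProduct_mulVec_le_of_rankOne_updates hΛ0 hΛ hx T le_rfl))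

end RankOneUpdates

lemma exp_one_le_log {T : ℝ} (hT : 16 ≤ T) : exp 1 ≤ log T := by
  have h16 : exp 1 ≤ log 16 := by
    rw [show (16 : ℝ) = 2 ^ 4 by norm_num, log_pow]
    push_cast
    linarith [exp_one_lt_d9, log_two_gt_d9]
  exact h16.trans (log_le_log (by norm_num) hT)

lemma one_le_log_log {T : ℝ} (hT : 16 ≤ T) : 1 ≤ log (log T) :=
  (le_log_iff_exp_le ((exp_pos 1).trans_le (exp_one_le_log hT))).mpr (exp_one_le_log hT)

lemma max_one_log_le {c z : ℝ} (hc : 1 ≤ c) (hz : 0 ≤ z) :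
    max 1 (log z) ≤ 1 + log c + z / c := by
  have hc0 : 0 < c := by linarith
  have hlogc := log_nonneg hc
  have hzc : 0 ≤ z / c := by positivity
  refine max_le (by linarith) ?_
  rcases hz.eq_or_lt with rfl | hz
  · simp only [log_zero]; linarith
  · have := log_le_sub_one_of_pos (div_pos hz hc0)
    rw [log_div hz.ne' hc0.ne'] at this
    linarith

lemma sum_max_one_log_le {d T : ℕ} (hd : 1 ≤ d) (hT : 16 ≤ T) {w : Fin T → ℝ}
    (hw : ∀ t, 0 ≤ w t) (hW : ∑ t, w t ≤ 4 * d * log T) :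
    ∑ t, max 1 (log (T * log T * w t / d)) ≤ 7 * T * log (log T) := by
  have hT' : (16 : ℝ) ≤ T := by exact_mod_cast hT
  have hL1 : 1 ≤ log T := by linarith [exp_one_le_log hT', add_one_le_exp (1 : ℝ)]
  have hL0 : 0 < log T := by linarith
  have hM := one_le_log_log hT'
  calc ∑ t, max 1 (log (T * log T * w t / d))
      ≤ ∑ t, (1 + log (log T ^ 2) + T * log T * w t / d / log T ^ 2) :=
        Finset.sum_le_sum fun t _ =>
          max_one_log_le (one_le_pow₀ hL1) (by have := hw t; positivity)
    _ = T * (1 + 2 * log (log T)) + T / (d * log T) * ∑ t, w t := by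
        rw [Finset.sum_add_distrib, Finset.mul_sum, log_pow]
        simp only [Finset.sum_const, Finset.card_univ, Fintype.card_fin, nsmul_eq_mul]
        push_cast
        congr 1
        refine Finset.sum_congr rfl fun t _ => ?_
        field_simp
    _ ≤ T * (1 + 2 * log (log T)) + T / (d * log T) * (4 * d * log T) := by gcongr
    _ ≤ 7 * T * log (log T) := by
        rw [show (T : ℝ) / (d * log T) * (4 * d * log T) = 4 * T by field_simp]
        nlinarith

lemma sum_sqrt_le_sqrt_mul_sqrt_sum {T : ℕ} {w : Fin T → ℝ} (hw : ∀ t, 0 ≤ w t) :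
    ∑ t, √(w t) ≤ √T * √(∑ t, w t) := by
  simpa using Real.sum_sqrt_mul_sqrt_le Finset.univ (fun _ => zero_le_one) hw

theorem sum_regret_le {d T : ℕ} (hd : 1 ≤ d) (hT : 16 ≤ T) {w : Fin T → ℝ}
    (hw : ∀ t, 0 ≤ w t) (hW : ∑ t, w t ≤ 4 * d * log T) :
    ∑ t, (√d + √(max 1 (log (T * log T * w t / d)))) * √(w t)
      ≤ 6 * (d * √(T * log T) + √(d * T * log T * log (log T))) := by
  set m := fun t => max 1 (log (T * log T * w t / d))
  have hT' : (16 : ℝ) ≤ T := by exact_mod_cast hT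
  have hL : 0 ≤ log T := log_nonneg (by linarith)
  have hM : 0 ≤ log (log T) := by linarith [one_le_log_log hT']
  have hW0 : 0 ≤ ∑ t, w t := Finset.sum_nonneg fun t _ => hw t
  have hm0 : 0 ≤ ∑ t, m t := Finset.sum_nonneg fun t _ => zero_le_one.trans (le_max_left _ _)
  have hm : ∑ t, m t ≤ 7 * T * log (log T) := sum_max_one_log_le hd hT hw hW
  have hconst : √d * ∑ t, √(w t) ≤ 2 * (d * √(T * log T)) :=
    calc √d * ∑ t, √(w t) ≤ √d * (√T * √(∑ t, w t)) := by
          gcongr; exact sum_sqrt_le_sqrt_mul_sqrt_sum hw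
      _ = √(d * T * ∑ t, w t) := by
          rw [sqrt_mul (by positivity), sqrt_mul (by positivity)]; ring
      _ ≤ √((2 * d) ^ 2 * (T * log T)) := sqrt_le_sqrt <| by
          nlinarith [mul_le_mul_of_nonneg_left hW (by positivity : (0 : ℝ) ≤ d * T)]
      _ = 2 * (d * √(T * log T)) := by
          rw [sqrt_mul (by positivity), sqrt_sq (by positivity)]; ring
  have hlog : ∑ t, √(m t) * √(w t) ≤ 6 * √(d * T * log T * log (log T)) :=
    calc ∑ t, √(m t) * √(w t) ≤ √(∑ t, m t) * √(∑ t, w t) :=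
          Real.sum_sqrt_mul_sqrt_le _ (fun t => zero_le_one.trans (le_max_left _ _)) hw
      _ = √((∑ t, m t) * ∑ t, w t) := (sqrt_mul hm0 _).symm
      _ ≤ √(6 ^ 2 * (d * T * log T * log (log T))) := sqrt_le_sqrt (by nlinarith)
      _ = 6 * √(d * T * log T * log (log T)) := by
          rw [sqrt_mul (by positivity), sqrt_sq (by positivity)]
  calc ∑ t, (√d + √(m t)) * √(w t) = √d * ∑ t, √(w t) + ∑ t, √(m t) * √(w t) := by
        rw [Finset.mul_sum, ← Finset.sum_add_distrib]; simp only [add_mul]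
    _ ≤ 6 * (d * √(T * log T) + √(d * T * log T * log (log T))) := by
        nlinarith [mul_nonneg (Nat.cast_nonneg d) (sqrt_nonneg (T * log T))]

/-- Deterministic core of the main regret bound:
`∑_t (√d + α_t) ω_t ≤ C (d√(T ln T) + √(d T ln T · ln ln T))`, where
`ω_t = √(x_tᵀ Λ_{t-1}⁻¹ x_t)` and `α_t = √(max{1, ln((T ln T) ω_t²/d)})`. -/
theorem main_regret_core :
    ∃ C : ℝ, 0 < C ∧
      ∀ (d T : ℕ), 1 ≤ d → 16 ≤ T →
      ∀ (x : Fin T → Fin d → ℝ), (∀ t, Real.sqrt (∑ i, x t i ^ 2) ≤ 1) →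
      ∀ (Λ : ℕ → Matrix (Fin d) (Fin d) ℝ), Λ 0 = 1 →
        (∀ t : Fin T, Λ ((t : ℕ) + 1) = Λ t + vecMulVec (x t) (x t)) →
      ∑ t : Fin T,
          (Real.sqrt d
            + Real.sqrt (max 1
                (Real.log ((T * Real.log T) * (x t ⬝ᵥ (Λ t)⁻¹ *ᵥ x t) / d))))
            * Real.sqrt (x t ⬝ᵥ (Λ t)⁻¹ *ᵥ x t)
        ≤ C * (d * Real.sqrt (T * Real.log T)
            + Real.sqrt (d * T * Real.log T * Real.log (Real.log T))) := by
  refine ⟨6, by norm_num, fun d T hd hT x hx Λ hΛ0 hΛ => ?_⟩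
  have hx1 : ∀ t, x t ⬝ᵥ x t ≤ 1 := fun t => by simpa [dotProduct, sq] using hx t
  have hT' : (16 : ℝ) ≤ T := by exact_mod_cast hT
  refine sum_regret_le hd hT
    (fun t => (posDef_of_rankOne_updates hΛ0 hΛ t t.is_lt.le).dotProduct_inv_mulVec_nonneg _) ?_
  have hlog : log (1 + T) ≤ 2 * log T := by
    have := log_le_log (by positivity) (show 1 + (T : ℝ) ≤ T ^ 2 by nlinarith)
    rwa [log_pow, Nat.cast_ofNat] at this
  calc ∑ t : Fin T, x t ⬝ᵥ ((Λ t)⁻¹ *ᵥ x t) ≤ 2 * log (Λ T).det :=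
        sum_dotProduct_inv_mulVec_le_two_mul_log_det hΛ0 hΛ hx1
    _ ≤ 2 * (d * log (1 + T)) := by
        simpa using log_det_le_of_rankOne_updates hΛ0 hΛ hx1
    _ ≤ 4 * d * log T := by nlinarith [(Nat.cast_nonneg d : (0 : ℝ) ≤ d)]
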